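/- For the d-dimensional Blatz volumetric energy h(J) = −(d/2)μ + (κ − (2/d)μ)(J−1) − (κ + ((d−2)/d)μ) log J with κ > (2/d)μ > 0: h'(1) = −μ, h''(J) = (κ + ((d−2)/d)μ)/J² > 0 and h'''(J) = −2(κ + ((d−2)/d)μ)/J³ < 0 for all J > 0. Consequently, with C := κ + ((d−2)/d)μ, for any J⁺, J⁻ > 0 and α, θ > 0 with J⁻ = J⁺ − αθ, one has (1/α)(h'(J⁺) − h'(J⁻)) = C·θ/(J⁺J⁻), and hence the stability parameter ρ(α) = (s²−μ)(1/θ − α/J⁺) − h''(J⁺), with s² − μ = Cθ/(J⁺J⁻), vanishes identically. -/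

import Mathlib

/-- The `d`-dimensional Blatz volumetric energy
`h(J) = -(d/2)μ + (κ - (2/d)μ)(J-1) - (κ + ((d-2)/d)μ) log J` with `κ > (2/d)μ > 0`
satisfies `h'(1) = -μ`, `h''(J) = C/J² > 0`, `h'''(J) = -2C/J³ < 0` on `(0,∞)` with
`C = κ + ((d-2)/d)μ`; moreover, for `J⁺, J⁻ > 0` and `α ≠ 0`, `θ > 0` with
`J⁻ = J⁺ - αθ`, one has `(1/α)(h'(J⁺) - h'(J⁻)) = Cθ/(J⁺J⁻)` and the stability parameter
`ρ(α) = (s² - μ)(1/θ - α/J⁺) - h''(J⁺)` with `s² - μ = Cθ/(J⁺J⁻)` vanishes. -/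
theorem stmt18 (d : ℕ) (hd : 2 ≤ d) (μ κ : ℝ) (hμ : 0 < μ)
    (hκ : (2 / (d : ℝ)) * μ < κ) :
    let h : ℝ → ℝ := fun J =>
      -((d : ℝ) / 2) * μ + (κ - (2 / (d : ℝ)) * μ) * (J - 1)
        - (κ + (((d : ℝ) - 2) / (d : ℝ)) * μ) * Real.log J
    let C : ℝ := κ + (((d : ℝ) - 2) / (d : ℝ)) * μ
    deriv h 1 = -μ ∧
    (∀ J : ℝ, 0 < J → deriv (deriv h) J = C / J ^ 2 ∧ 0 < deriv (deriv h) J) ∧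
    (∀ J : ℝ, 0 < J →
      deriv (deriv (deriv h)) J = -(2 * C) / J ^ 3 ∧ deriv (deriv (deriv h)) J < 0) ∧
    (∀ Jp Jm α θ : ℝ, 0 < Jp → 0 < Jm → α ≠ 0 → 0 < θ → Jm = Jp - α * θ →
      (1 / α) * (deriv h Jp - deriv h Jm) = C * θ / (Jp * Jm) ∧
      (C * θ / (Jp * Jm)) * (1 / θ - α / Jp) - deriv (deriv h) Jp = 0) := by
  intro h C
  have hd2 : (2 : ℝ) ≤ (d : ℝ) := by exact_mod_cast hd
  have hd0 : (0 : ℝ) < (d : ℝ) := by linarith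
  set B : ℝ := κ - 2 / (d : ℝ) * μ with hB
  have hC : 0 < C := by
    have h1 : 0 ≤ ((d : ℝ) - 2) / (d : ℝ) * μ := mul_nonneg (div_nonneg (by linarith) hd0.le) hμ.le
    have h2 : 0 < κ := lt_trans (by positivity) hκ
    simp only [C]; linarith
  -- first derivative
  have hderiv : ∀ J : ℝ, J ≠ 0 → deriv h J = B - C / J := by
    intro J hJ
    have H : HasDerivAt h (B * 1 - C * J⁻¹) J := by
      have h1 : HasDerivAt (fun J : ℝ => -((d : ℝ) / 2) * μ + B * (J - 1)) (B * 1) J :=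
        (((hasDerivAt_id J).sub_const 1).const_mul B).const_add _
      exact h1.sub ((Real.hasDerivAt_log hJ).const_mul C)
    rw [H.deriv]; field_simp
  -- second derivative
  have hderiv2 : ∀ J : ℝ, 0 < J → deriv (deriv h) J = C / J ^ 2 := by
    intro J hJ
    have heq : deriv h =ᶠ[nhds J] fun x => B - C / x := by
      filter_upwards [eventually_ne_nhds hJ.ne'] with x hx using hderiv x hx
    rw [heq.deriv_eq]
    have H : HasDerivAt (fun x : ℝ => B - C / x) (-(C * -(J ^ 2)⁻¹)) J :=
      (((hasDerivAt_inv hJ.ne').const_mul C).const_sub B).congr_deriv (by ring)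
    have H' : HasDerivAt (fun x : ℝ => B - C / x) (C / J ^ 2) J := by
      convert H using 1; field_simp
    exact H'.deriv
  -- third derivative
  have hderiv3 : ∀ J : ℝ, 0 < J → deriv (deriv (deriv h)) J = -(2 * C) / J ^ 3 := by
    intro J hJ
    have heq : deriv (deriv h) =ᶠ[nhds J] fun x => C / x ^ 2 := by
      filter_upwards [eventually_gt_nhds hJ] with x hx using hderiv2 x hx
    rw [heq.deriv_eq]
    have H : HasDerivAt (fun x : ℝ => C / x ^ 2)
        (C * (-(2 * J ^ 1) / (J ^ 2) ^ 2)) J := by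
      have := ((hasDerivAt_pow 2 J).inv (by positivity)).const_mul C
      simpa [div_eq_mul_inv] using this
    have H' : HasDerivAt (fun x : ℝ => C / x ^ 2) (-(2 * C) / J ^ 3) J := by
      convert H using 1
      have : J ≠ 0 := hJ.ne'
      field_simp
    exact H'.deriv
  refine ⟨?_, fun J hJ => ⟨hderiv2 J hJ, by rw [hderiv2 J hJ]; positivity⟩,
    fun J hJ => ⟨hderiv3 J hJ, by
      rw [hderiv3 J hJ]
      have : 0 < J ^ 3 := by positivity
      exact div_neg_of_neg_of_pos (by linarith) this⟩, ?_⟩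
  · rw [hderiv 1 one_ne_zero]
    simp only [C, B]
    field_simp
    ring
  · intro Jp Jm α θ hJp hJm hα hθ hRH
    rw [hderiv Jp hJp.ne', hderiv Jm hJm.ne', hderiv2 Jp hJp]
    subst hRH
    constructor
    · field_simp
      ring
    · field_simp
      have hne : Jp - θ * α ≠ 0 := (by linarith : 0 < Jp - θ * α).ne'
      field_simp
      ring
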